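/- arXiv:1110.1268 — 2 statements merged into one kernel-verified Lean document; each statement's English description precedes it below -/
import Mathlib

section
/- Let k ≥ 2 be an integer and let G be a non-complete connected simple graph on n vertices such that σ₂(G) ≥ n − 2 + 2·log_k(n), where σ₂(G) denotes the minimum of deg(u) + deg(v) over all pairs of distinct non-adjacent vertices u, v of G. Then rc(G) ≤ k. -/
/-!
Colour the edges with `k` colours at random. For non-adjacent `u ≠ v` the bound on `σ₂` leaves
room for at least `t ≥ 2 log_k n` common neighbours `w`, and `u w v` is a rainbow path unless
its two edges get the same colour; the edges `uw` are distinct from the edges `wv`, so all `t`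
paths fail with probability at most `k⁻ᵗ ≤ n⁻²`. There are fewer than `n²` such pairs, so some
colouring makes every non-adjacent pair rainbow connected through a common neighbour, and
adjacent pairs are joined by a single edge. Probabilities appear as counts of colourings.
-/

open SimpleGraph

/-- A graph `G` is rainbow connected under an edge-coloring `c` if every pair of
distinct vertices is joined by a path whose edges receive pairwise distinct colors. -/
def IsRainbowConnected {V α : Type*} (G : SimpleGraph V) (c : Sym2 V → α) : Prop :=
  ∀ u v : V, u ≠ v → ∃ p : G.Walk u v, p.IsPath ∧ (p.edges.map c).Nodup

open Finset

theorem card_filter_forall_eq_mul_pow_le {ι α β : Type*} [Fintype α] [DecidableEq α]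
    [Fintype β] (f g : ι → α) (s : Finset ι)
    [DecidablePred fun c : α → β => ∀ i ∈ s, c (f i) = c (g i)]
    (hf : Set.InjOn f s) (hfg : ∀ i ∈ s, ∀ j ∈ s, f i ≠ g j) :
    #{c : α → β | ∀ i ∈ s, c (f i) = c (g i)} * Fintype.card β ^ #s ≤
      Fintype.card β ^ Fintype.card α := by
  set T := s.image f
  have hT : #T = #s := card_image_of_injOn hf
  -- Such a colouring is determined by its restriction to `Tᶜ`, since `c (f i) = c (g i)`
  -- with `g i ∉ T`.
  have hres : #{c : α → β | ∀ i ∈ s, c (f i) = c (g i)} ≤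
      Fintype.card ((Tᶜ : Finset α) → β) := by
    refine card_le_card_of_injOn (t := univ) (fun c x => c x)
      (fun _ _ => mem_coe.2 (mem_univ _)) ?_
    intro c hc c' hc' h
    funext x
    by_cases hx : x ∈ T
    · obtain ⟨i, hi, rfl⟩ := mem_image.1 hx
      have hgi : g i ∈ Tᶜ := mem_compl.2 fun hg => by
        obtain ⟨j, hj, hj'⟩ := mem_image.1 hg
        exact hfg j hj i hi hj'
      rw [(mem_filter.1 hc).2 i hi, (mem_filter.1 hc').2 i hi]
      exact congrFun h ⟨g i, hgi⟩
    · exact congrFun h ⟨x, mem_compl.2 hx⟩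
  rw [Fintype.card_fun, Fintype.card_coe, card_compl, hT] at hres
  calc _ ≤ Fintype.card β ^ (Fintype.card α - #s) * Fintype.card β ^ #s :=
        Nat.mul_le_mul_right _ hres
    _ = Fintype.card β ^ Fintype.card α := pow_sub_mul_pow _ (hT ▸ card_le_univ T)

theorem exists_forall_notMem_of_card_mul_le {ι Ω : Type*} [Fintype Ω] [Nonempty Ω]
    (P : Finset ι) (B : ι → Finset Ω) {m : ℕ} (hP : #P < m)
    (hB : ∀ p ∈ P, #(B p) * m ≤ Fintype.card Ω) : ∃ x, ∀ p ∈ P, x ∉ B p := by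
  classical
  have hunion : #(P.biUnion B) * m < Fintype.card Ω * m := calc
    #(P.biUnion B) * m ≤ ∑ p ∈ P, #(B p) * m := by
      rw [← sum_mul]; exact Nat.mul_le_mul_right _ card_biUnion_le
    _ ≤ #P * Fintype.card Ω := by simpa using sum_le_sum hB
    _ < m * Fintype.card Ω := Nat.mul_lt_mul_of_pos_right hP Fintype.card_pos
    _ = Fintype.card Ω * m := Nat.mul_comm _ _
  obtain ⟨x, -, hx⟩ :=
    exists_mem_notMem_of_card_lt_card (t := univ) (lt_of_mul_lt_mul_right' hunion)
  exact ⟨x, fun p hp hxp => hx (mem_biUnion.2 ⟨p, hp, hxp⟩)⟩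

theorem card_lt_sq_of_forall_fst_ne_snd {α : Type*} [Fintype α] [Nonempty α]
    (P : Finset (α × α)) (hP : ∀ p ∈ P, p.1 ≠ p.2) : #P < Fintype.card α ^ 2 := by
  classical
  calc #P ≤ #(univ : Finset α).offDiag := card_le_card fun p hp => by simpa using hP p hp
    _ < Fintype.card α ^ 2 := by
      rw [offDiag_card, card_univ, sq]
      exact Nat.sub_lt (Nat.mul_pos Fintype.card_pos Fintype.card_pos) Fintype.card_pos

theorem sq_le_pow_of_two_mul_logb_le {b x : ℝ} {t : ℕ} (hb : 1 < b) (hx : 0 < x)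
    (h : 2 * Real.logb b x ≤ t) : x ^ 2 ≤ b ^ t := by
  rw [← Real.rpow_natCast b t, ← Real.logb_le_iff_le_rpow hb (by positivity), Real.logb_pow]
  exact_mod_cast h

namespace SimpleGraph

variable {V : Type*} {G : SimpleGraph V}

theorem isRainbowConnected_of_exists_commonNeighbor {α : Type*} {c : Sym2 V → α}
    (h : ∀ u v, u ≠ v → ¬ G.Adj u v → ∃ w, G.Adj u w ∧ G.Adj w v ∧ c s(u, w) ≠ c s(w, v)) :
    IsRainbowConnected G c := by
  intro u v huv
  by_cases hadj : G.Adj u v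
  · exact ⟨.cons hadj .nil, by simp [hadj.ne], by simp⟩
  · obtain ⟨w, huw, hwv, hc⟩ := h u v huv hadj
    exact ⟨.cons huw (.cons hwv .nil), by simp [huv, huw.ne, hwv.ne], by simp [hc]⟩

variable [Fintype V] [DecidableEq V] [DecidableRel G.Adj]

theorem degree_add_degree_add_two_le_of_not_adj {u v : V} (huv : u ≠ v) (hadj : ¬ G.Adj u v) :
    G.degree u + G.degree v + 2 ≤
      Fintype.card V + #(G.neighborFinset u ∩ G.neighborFinset v) := by
  have hunion : G.neighborFinset u ∪ G.neighborFinset v ⊆ {u, v}ᶜ := by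
    intro w hw
    simp only [mem_union, mem_neighborFinset] at hw
    simp only [mem_compl, mem_insert, mem_singleton, not_or]
    rcases hw with h | h
    · exact ⟨h.ne', fun e => hadj (e ▸ h)⟩
    · exact ⟨fun e => hadj (e ▸ h.symm), h.ne'⟩
  have hcompl := card_le_card hunion
  have hpair := card_le_univ ({u, v} : Finset V)
  rw [card_compl, card_pair huv] at hcompl
  rw [card_pair huv] at hpair
  rw [← card_neighborFinset_eq_degree, ← card_neighborFinset_eq_degree,
    ← card_union_add_card_inter]
  omega

theorem sq_card_le_pow_card_inter_neighborFinset {k : ℝ} (hk : 1 < k) {u v : V} (huv : u ≠ v)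
    (hadj : ¬ G.Adj u v)
    (hσ : (Fintype.card V : ℝ) - 2 + 2 * Real.logb k (Fintype.card V) ≤
      G.degree u + G.degree v) :
    (Fintype.card V : ℝ) ^ 2 ≤ k ^ #(G.neighborFinset u ∩ G.neighborFinset v) := by
  have : Nonempty V := ⟨u⟩
  have hdeg : (G.degree u + G.degree v + 2 : ℝ) ≤
      Fintype.card V + #(G.neighborFinset u ∩ G.neighborFinset v) := by
    exact_mod_cast degree_add_degree_add_two_le_of_not_adj huv hadj
  exact sq_le_pow_of_two_mul_logb_le hk (by exact_mod_cast Fintype.card_pos) (by linarith)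

theorem card_filter_commonNeighbors_eq_mul_pow_le {β : Type*} [Fintype β] [DecidableEq β]
    {u v : V} (huv : u ≠ v) :
    #{c : Sym2 V → β | ∀ w ∈ G.neighborFinset u ∩ G.neighborFinset v, c s(u, w) = c s(w, v)} *
        Fintype.card β ^ #(G.neighborFinset u ∩ G.neighborFinset v) ≤
      Fintype.card β ^ Fintype.card (Sym2 V) := by
  have hinj : Set.InjOn (fun w => s(u, w)) ↑(G.neighborFinset u ∩ G.neighborFinset v) :=
    fun w _ w' _ h => Sym2.congr_right.1 h
  have hdisj : ∀ w ∈ G.neighborFinset u ∩ G.neighborFinset v,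
      ∀ w' ∈ G.neighborFinset u ∩ G.neighborFinset v, s(u, w) ≠ s(w', v) := by
    intro w _ w' hw' h
    rcases Sym2.mem_iff.1 (h ▸ Sym2.mem_mk_left u w) with rfl | rfl
    · simp at hw'
    · exact huv rfl
  exact card_filter_forall_eq_mul_pow_le _ _ _ hinj hdisj

end SimpleGraph

theorem rc_le_of_sigma_two_general (k n : ℕ) (hk : 2 ≤ k) (G : SimpleGraph (Fin n))
    [DecidableRel G.Adj] (hnc : G ≠ ⊤)
    (hσ : ∀ u v : Fin n, u ≠ v → ¬ G.Adj u v →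
      (n : ℝ) - 2 + 2 * Real.logb k n ≤ (G.degree u : ℝ) + (G.degree v : ℝ)) :
    ∃ c : Sym2 (Fin n) → Fin k, IsRainbowConnected G c := by
  have : Nonempty (Fin n) := Fin.pos_iff_nonempty.1 <|
    Nat.pos_of_ne_zero fun h => hnc (by subst h; exact Subsingleton.elim _ _)
  have : Nonempty (Fin k) := ⟨⟨0, by omega⟩⟩
  let P : Finset (Fin n × Fin n) := {p | p.1 ≠ p.2 ∧ ¬ G.Adj p.1 p.2}
  let Bad (p : Fin n × Fin n) : Finset (Sym2 (Fin n) → Fin k) :=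
    {c | ∀ w ∈ G.neighborFinset p.1 ∩ G.neighborFinset p.2, c s(p.1, w) = c s(w, p.2)}
  have hP : #P < n ^ 2 := by
    simpa using card_lt_sq_of_forall_fst_ne_snd P fun p hp => (mem_filter.1 hp).2.1
  have hBad : ∀ p ∈ P, #(Bad p) * n ^ 2 ≤ Fintype.card (Sym2 (Fin n) → Fin k) := by
    rintro ⟨u, v⟩ hp
    obtain ⟨huv, hadj⟩ := (mem_filter.1 hp).2
    have hW := G.sq_card_le_pow_card_inter_neighborFinset (k := k) (by exact_mod_cast hk) huv
      hadj (by simpa using hσ u v huv hadj)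
    rw [Fintype.card_fin] at hW
    calc #(Bad (u, v)) * n ^ 2 ≤ #(Bad (u, v)) * k ^ #(G.neighborFinset u ∩ G.neighborFinset v) :=
          Nat.mul_le_mul_left _ (by exact_mod_cast hW)
      _ ≤ _ := by
        simpa only [Fintype.card_fin, Fintype.card_fun] using
          G.card_filter_commonNeighbors_eq_mul_pow_le (β := Fin k) huv
  obtain ⟨c, hc⟩ := exists_forall_notMem_of_card_mul_le P Bad hP hBad
  refine ⟨c, isRainbowConnected_of_exists_commonNeighbor fun u v huv hadj => ?_⟩
  have hgood := hc (u, v) (by simp [P, huv, hadj])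
  simp only [Bad, mem_filter, not_and, not_forall, mem_inter, mem_neighborFinset] at hgood
  obtain ⟨w, ⟨huw, hvw⟩, hw⟩ := hgood (mem_univ _)
  exact ⟨w, huw, hvw.symm, hw⟩

/-- If `k ≥ 2` and `G` is a non-complete connected graph on `n` vertices whose
minimum degree-sum over pairs of distinct non-adjacent vertices satisfies
`σ₂(G) ≥ n - 2 + 2 log_k n`, then `rc(G) ≤ k`. -/
theorem rc_le_of_sigma_two (k n : ℕ) (hk : 2 ≤ k) (G : SimpleGraph (Fin n))
    [DecidableRel G.Adj] (hnc : G ≠ ⊤) (hconn : G.Connected)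
    (hσ : ∀ u v : Fin n, u ≠ v → ¬ G.Adj u v →
      (n : ℝ) - 2 + 2 * Real.logb k n ≤ (G.degree u : ℝ) + (G.degree v : ℝ)) :
    ∃ c : Sym2 (Fin n) → Fin k, IsRainbowConnected G c :=
  rc_le_of_sigma_two_general k n hk G hnc hσ
end

section
/- Let k ≥ 3 be an integer and let G be a simple graph on n vertices with diameter 2 and minimum degree δ(G) ≥ 2·(1 + log_{k²/(3k−2)}(k))·log_k(n). Then rc(G) ≤ k. -/
/-!
Color the edges of `G` with `k` colors uniformly at random and fix a non-adjacent pair `u, v`.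
If `u` and `v` have at least `2 log_k n` common neighbours `w`, the paths `u w v` are edge-disjoint
and each fails to be rainbow with probability `1/k`, so all of them fail with probability at most
`n⁻²`. Otherwise `u` has at least `2 log_b n` neighbours `w` outside `N(v)`, `b = k²/(3k-2)`; by
diameter two each has a neighbour `x_w ∈ N(v)`. The edges `uw`, `wx_w` are pairwise distinct,
and conditionally on the colors of the edges `x_w v` each path `u w x_w v` fails to be rainbow
with probability at most `(3k-2)/k² = 1/b`, so again all fail with probability at most `n⁻²`.
A union bound over the fewer than `n²` ordered pairs leaves a rainbow connecting coloring.
-/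

open SimpleGraph

open Finset Fintype

theorem Finset.exists_forall_notMem_of_sum_card_lt {ι X : Type*} [Fintype X] [DecidableEq X]
    (s : Finset ι) (B : ι → Finset X) (h : ∑ i ∈ s, #(B i) < Fintype.card X) :
    ∃ x, ∀ i ∈ s, x ∉ B i := by
  by_contra! hcover
  have : univ ⊆ s.biUnion B := fun x _ => mem_biUnion.mpr (hcover x)
  exact h.not_ge ((card_le_card this).trans card_biUnion_le)

theorem card_filter_eq_or_eq_or_eq_le {α : Type*} [Fintype α] [DecidableEq α] (z : α) :
    #{q : α × α | q.1 = q.2 ∨ q.1 = z ∨ q.2 = z} ≤ 3 * card α - 2 := by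
  have hsub : ({q : α × α | q.1 = q.2 ∨ q.1 = z ∨ q.2 = z} : Finset _) ⊆
      univ.diag ∪ {z} ×ˢ univ.erase z ∪ univ.erase z ×ˢ {z} := by
    rintro ⟨x, y⟩ hq
    simp only [mem_filter, mem_univ, true_and] at hq
    simp only [mem_union, mem_diag, mem_product, mem_singleton, mem_erase, mem_univ, and_true,
      true_and]
    grind
  have hpos : 0 < card α := card_pos_iff.mpr ⟨z⟩
  calc _ ≤ #(univ.diag ∪ {z} ×ˢ univ.erase z ∪ univ.erase z ×ˢ {z}) := card_le_card hsub
    _ ≤ #(univ.diag : Finset (α × α)) + #({z} ×ˢ univ.erase z) + #(univ.erase z ×ˢ {z}) :=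
        (card_union_le _ _).trans (Nat.add_le_add_right (card_union_le _ _) _)
    _ = card α + (card α - 1) + (card α - 1) := by
        simp [card_erase_of_mem]
    _ = 3 * card α - 2 := by omega

/-- `S i c` may depend on the values of `c` off the pairs, which amounts to conditioning on them;
colorings are counted fibrewise over their restriction to the complement of the pairs. -/
theorem mul_card_filter_forall_mem_le {E ι α : Type*} [Fintype E] [DecidableEq E] [Fintype ι]
    [Fintype α] [DecidableEq α] {a b : ι → E} (hab : Function.Injective (Sum.elim a b))
    (S : ι → (E → α) → Finset (α × α))
    (hS : ∀ i c c', Set.EqOn c c' (Set.range (Sum.elim a b))ᶜ → S i c = S i c')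
    {M m : ℕ} (hM : ∀ i c, #(S i c) ≤ M) (hm : m * M ^ card ι ≤ card α ^ (2 * card ι)) :
    m * #{c : E → α | ∀ i, (c (a i), c (b i)) ∈ S i c} ≤ card α ^ card E := by
  classical
  set R := (Set.range (Sum.elim a b))ᶜ
  set bad := ({c : E → α | ∀ i, (c (a i), c (b i)) ∈ S i c} : Finset _)
  have hR : card R + 2 * card ι = card E := by
    have := card_le_of_injective _ hab
    rw [card_compl_set, Set.card_range_of_injective hab, card_sum] at *
    omega
  have hfiber : #bad ≤ M ^ card ι * #(bad.image fun c (e : R) => c e) := by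
    refine card_le_mul_card_image _ _ fun r hr => ?_
    obtain ⟨c₀, -, rfl⟩ := mem_image.mp hr
    have hagree : ∀ c ∈ ({c ∈ bad | (fun e : R => c e) = fun e : R => c₀ e} : Finset _),
        Set.EqOn c c₀ R := by
      intro c hc e he
      exact congrFun (mem_filter.mp hc).2 ⟨e, he⟩
    calc #{c ∈ bad | (fun e : R => c e) = fun e : R => c₀ e}
        ≤ #(piFinset fun i => S i c₀) := by
          refine card_le_card_of_injOn (fun (c : E → α) (i : ι) => (c (a i), c (b i)))
            (fun c hc => ?_) ?_
          · rw [mem_coe, mem_piFinset]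
            intro i
            rw [← hS i c c₀ (hagree c hc)]
            exact (mem_filter.mp (mem_filter.mp hc).1).2 i
          · intro c hc c' hc' hcc'
            funext e
            by_cases he : e ∈ R
            · exact (hagree c hc he).trans (hagree c' hc' he).symm
            · obtain ⟨i | i, rfl⟩ := not_not.mp he
              · exact congrArg Prod.fst (congrFun hcc' i)
              · exact congrArg Prod.snd (congrFun hcc' i)
      _ = ∏ i, #(S i c₀) := card_piFinset _
      _ ≤ M ^ card ι := prod_le_pow_card _ _ _ fun i _ => hM i c₀
  have himage : #(bad.image fun c (e : R) => c e) ≤ card α ^ card R :=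
    (card_le_univ _).trans_eq (by rw [card_fun])
  calc m * #bad ≤ m * M ^ card ι * card α ^ card R := by
        rw [mul_assoc]; exact Nat.mul_le_mul_left _ (hfiber.trans (Nat.mul_le_mul_left _ himage))
    _ ≤ card α ^ (2 * card ι) * card α ^ card R := Nat.mul_le_mul_right _ hm
    _ = card α ^ card E := by rw [← pow_add, ← hR, add_comm]

theorem sq_mul_pow_le_pow_of_two_mul_logb_le {n M K t : ℕ} {b : ℝ} (hb : 1 < b)
    (hbMK : b * M ≤ K) (hn : 0 < n) (h : 2 * Real.logb b n ≤ t) : n ^ 2 * M ^ t ≤ K ^ t := by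
  have hnb : (n : ℝ) ^ 2 ≤ b ^ t := by
    rw [← Real.rpow_natCast b, ← Real.logb_le_iff_le_rpow hb (by positivity), Real.logb_pow]
    push_cast
    linarith
  have : (n : ℝ) ^ 2 * M ^ t ≤ K ^ t :=
    calc (n : ℝ) ^ 2 * M ^ t ≤ b ^ t * M ^ t := by gcongr
      _ = (b * M) ^ t := (mul_pow _ _ _).symm
      _ ≤ K ^ t := by gcongr
  exact_mod_cast this

namespace SimpleGraph

variable {V α : Type*}

def HasRainbowPath (G : SimpleGraph V) (c : Sym2 V → α) (u v : V) : Prop :=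
  ∃ p : G.Walk u v, p.IsPath ∧ (p.edges.map c).Nodup

variable {G : SimpleGraph V}

theorem hasRainbowPath_of_adj {u v : V} (c : Sym2 V → α) (h : G.Adj u v) :
    G.HasRainbowPath c u v :=
  ⟨.cons h .nil, by simp [Walk.isPath_def, h.ne], by simp⟩

theorem hasRainbowPath_of_adj_adj {u w v : V} {c : Sym2 V → α} (huw : G.Adj u w)
    (hwv : G.Adj w v) (huv : u ≠ v) (hc : c s(u, w) ≠ c s(w, v)) : G.HasRainbowPath c u v :=
  ⟨.cons huw (.cons hwv .nil), by simp [Walk.isPath_def, huw.ne, hwv.ne, huv], by simp [hc]⟩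

theorem hasRainbowPath_of_adj_adj_adj {u w x v : V} {c : Sym2 V → α} (huw : G.Adj u w)
    (hwx : G.Adj w x) (hxv : G.Adj x v) (hux : u ≠ x) (huv : u ≠ v) (hwv : w ≠ v)
    (hc₁ : c s(u, w) ≠ c s(w, x)) (hc₂ : c s(u, w) ≠ c s(x, v)) (hc₃ : c s(w, x) ≠ c s(x, v)) :
    G.HasRainbowPath c u v :=
  ⟨.cons huw (.cons hwx (.cons hxv .nil)),
    by simp [Walk.isPath_def, huw.ne, hwx.ne, hxv.ne, hux, huv, hwv], by simp [hc₁, hc₂, hc₃]⟩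

theorem commonNeighbors_nonempty_of_ediam_le_two (hG : G.ediam ≤ 2) {u v : V} (huv : u ≠ v)
    (hadj : ¬G.Adj u v) : (G.commonNeighbors u v).Nonempty := by
  by_contra hempty
  have := two_lt_edist_iff.mpr ⟨huv, hadj, Set.not_nonempty_iff_eq_empty.mp hempty⟩
  exact (edist_le_ediam.trans hG).not_gt this

variable [Fintype V] [DecidableEq V] [Fintype α]

variable (G α) in
open Classical in
noncomputable def coloringsWithoutRainbowPath (u v : V) : Finset (Sym2 V → α) :=
  {c | ¬G.HasRainbowPath c u v}

theorem mem_coloringsWithoutRainbowPath {u v : V} {c : Sym2 V → α} :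
    c ∈ G.coloringsWithoutRainbowPath α u v ↔ ¬G.HasRainbowPath c u v := by
  simp [coloringsWithoutRainbowPath]

theorem coloringsWithoutRainbowPath_subset {u v : V} {B : Finset (Sym2 V → α)}
    (h : ∀ c ∉ B, G.HasRainbowPath c u v) : G.coloringsWithoutRainbowPath α u v ⊆ B :=
  fun c hc => by_contra fun hcB => mem_coloringsWithoutRainbowPath.mp hc (h c hcB)

theorem exists_isRainbowConnected_of_sq_card_mul_le [Nonempty α]
    (h : ∀ u v, u ≠ v →
      card V ^ 2 * #(G.coloringsWithoutRainbowPath α u v) ≤ card α ^ card (Sym2 V)) :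
    ∃ c : Sym2 V → α, IsRainbowConnected G c := by
  classical
  cases isEmpty_or_nonempty V
  · exact ⟨fun _ => Classical.arbitrary α, fun u => isEmptyElim u⟩
  have hn : 0 < card V := card_pos
  obtain ⟨c, hc⟩ := exists_forall_notMem_of_sum_card_lt univ.offDiag
    (fun p => G.coloringsWithoutRainbowPath α p.1 p.2) <| lt_of_mul_lt_mul_left' <|
    calc card V ^ 2 * ∑ p ∈ univ.offDiag, #(G.coloringsWithoutRainbowPath α p.1 p.2)
        ≤ ∑ _p ∈ (univ : Finset V).offDiag, card α ^ card (Sym2 V) := by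
          rw [mul_sum]
          exact sum_le_sum fun p hp => h p.1 p.2 (mem_offDiag.mp hp).2.2
      _ = (card V * card V - card V) * card α ^ card (Sym2 V) := by
          rw [sum_const, offDiag_card, card_univ, smul_eq_mul]
      _ < card V ^ 2 * card (Sym2 V → α) := by
          rw [card_fun, sq]
          exact Nat.mul_lt_mul_of_pos_right (Nat.sub_lt (by positivity) hn) (by positivity)
  exact ⟨c, fun u v huv => mem_coloringsWithoutRainbowPath.not_left.mp
    (hc (u, v) (by simpa using huv))⟩

variable [DecidableEq α] [DecidableRel G.Adj]

theorem mul_card_coloringsWithoutRainbowPath_le_of_commonNeighbors {u v : V} (huv : u ≠ v)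
    {m : ℕ} (hm : m * card α ^ #(G.neighborFinset u ∩ G.neighborFinset v) ≤
      card α ^ (2 * #(G.neighborFinset u ∩ G.neighborFinset v))) :
    m * #(G.coloringsWithoutRainbowPath α u v) ≤ card α ^ card (Sym2 V) := by
  set C := G.neighborFinset u ∩ G.neighborFinset v
  have hC (w : C) : G.Adj u w ∧ G.Adj w v := by
    have hw := w.2
    simp only [C, mem_inter, mem_neighborFinset] at hw
    exact ⟨hw.1, hw.2.symm⟩
  have hab : Function.Injective
      (Sum.elim (fun w : C => s(u, (w : V))) fun w : C => s((w : V), v)) := by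
    refine .sumElim (fun w w' h => Subtype.ext (Sym2.congr_right.mp h))
      (fun w w' h => Subtype.ext (Sym2.congr_left.mp h)) fun w w' h => ?_
    rcases Sym2.eq_iff.mp h with ⟨hu, -⟩ | ⟨huv', -⟩
    · exact (hC w').1.ne hu
    · exact huv huv'
  refine le_trans (Nat.mul_le_mul_left m (card_le_card (coloringsWithoutRainbowPath_subset ?_)))
    (mul_card_filter_forall_mem_le hab (fun _ _ => univ.diag) (fun _ _ _ _ => rfl)
      (fun _ _ => (diag_card _).le) (by rwa [Fintype.card_coe]))
  intro c hc
  simp only [mem_filter, mem_univ, true_and, mem_diag, not_forall] at hc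
  obtain ⟨w, hw⟩ := hc
  exact hasRainbowPath_of_adj_adj (hC w).1 (hC w).2 huv hw

theorem mul_card_coloringsWithoutRainbowPath_le_of_neighborFinset_sdiff (hG : G.ediam ≤ 2)
    {u v : V} (huv : u ≠ v) (hadj : ¬G.Adj u v) {m : ℕ}
    (hm : m * (3 * card α - 2) ^ #(G.neighborFinset u \ G.neighborFinset v) ≤
      card α ^ (2 * #(G.neighborFinset u \ G.neighborFinset v))) :
    m * #(G.coloringsWithoutRainbowPath α u v) ≤ card α ^ card (Sym2 V) := by
  set W := G.neighborFinset u \ G.neighborFinset v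
  have hW (w : W) : G.Adj u w ∧ ¬G.Adj w v ∧ (w : V) ≠ v := by
    have hw := w.2
    simp only [W, mem_sdiff, mem_neighborFinset] at hw
    exact ⟨hw.1, fun h => hw.2 h.symm, by rintro h; exact hadj (h ▸ hw.1)⟩
  choose x hx using fun w : W =>
    commonNeighbors_nonempty_of_ediam_le_two hG (hW w).2.2 (hW w).2.1
  simp only [mem_commonNeighbors, G.adj_comm v] at hx
  have hxu (w : W) : x w ≠ u := fun h => hadj (h ▸ (hx w).2)
  have hab : Function.Injective
      (Sum.elim (fun w : W => s(u, (w : V))) fun w : W => s((w : V), x w)) := by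
    refine .sumElim (fun w w' h => Subtype.ext (Sym2.congr_right.mp h)) (fun w w' h => ?_)
      fun w w' h => ?_
    · rcases Sym2.eq_iff.mp h with ⟨hww', -⟩ | ⟨hw, -⟩
      · exact Subtype.ext hww'
      · exact absurd (hw ▸ (hx w').2) (hW w).2.1
    · rcases Sym2.eq_iff.mp h with ⟨hu, -⟩ | ⟨hu, -⟩
      · exact (hW w').1.ne hu
      · exact hxu w' hu.symm
  have hxv (w : W) : s(x w, v) ∉ Set.range
      (Sum.elim (fun w : W => s(u, (w : V))) fun w : W => s((w : V), x w)) := by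
    rintro ⟨w' | w', h⟩ <;> rcases Sym2.eq_iff.mp h with ⟨h₁, h₂⟩ | ⟨h₁, h₂⟩
    · exact hxu w h₁.symm
    · exact huv h₁
    · exact (hx w').2.ne h₂
    · exact (hW w').2.2 h₁
  refine le_trans (Nat.mul_le_mul_left m (card_le_card (coloringsWithoutRainbowPath_subset ?_)))
    (mul_card_filter_forall_mem_le hab
      (fun w c => {q | q.1 = q.2 ∨ q.1 = c s(x w, v) ∨ q.2 = c s(x w, v)})
      (fun w c c' hcc' => by rw [hcc' (hxv w)])
      (fun w c => card_filter_eq_or_eq_or_eq_le _) (by rwa [Fintype.card_coe]))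
  intro c hc
  simp only [mem_filter, mem_univ, true_and, not_forall, not_or] at hc
  obtain ⟨w, hc₁, hc₂, hc₃⟩ := hc
  exact hasRainbowPath_of_adj_adj_adj (hW w).1 (hx w).1 (hx w).2 (hxu w).symm huv (hW w).2.2
    hc₁ hc₂ hc₃

theorem sq_card_mul_card_coloringsWithoutRainbowPath_le (hG : G.ediam ≤ 2) {k : ℕ} (hk : 3 ≤ k)
    {u v : V} (huv : u ≠ v)
    (hdeg : 2 * Real.logb k (card V) + 2 * Real.logb ((k : ℝ) ^ 2 / (3 * k - 2)) (card V) ≤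
      G.degree u) :
    card V ^ 2 * #(G.coloringsWithoutRainbowPath (Fin k) u v) ≤ k ^ card (Sym2 V) := by
  by_cases hadj : G.Adj u v
  · have : G.coloringsWithoutRainbowPath (Fin k) u v = ∅ := eq_empty_of_forall_notMem
      fun c hc => mem_coloringsWithoutRainbowPath.mp hc (hasRainbowPath_of_adj c hadj)
    simp [this]
  suffices h : card V ^ 2 * #(G.coloringsWithoutRainbowPath (Fin k) u v) ≤
      card (Fin k) ^ card (Sym2 V) by rwa [Fintype.card_fin] at h
  have hn : 0 < card V := card_pos_iff.mpr ⟨u⟩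
  have hk1 : (1 : ℝ) < k := by exact_mod_cast (by omega : 1 < k)
  have hsplit := card_inter_add_card_sdiff (G.neighborFinset u) (G.neighborFinset v)
  rw [card_neighborFinset_eq_degree] at hsplit
  by_cases hC : 2 * Real.logb k (card V) ≤ #(G.neighborFinset u ∩ G.neighborFinset v)
  · refine mul_card_coloringsWithoutRainbowPath_le_of_commonNeighbors huv ?_
    rw [Fintype.card_fin, pow_mul]
    exact sq_mul_pow_le_pow_of_two_mul_logb_le hk1 (by rw [Nat.cast_pow, sq]) hn hC
  · refine mul_card_coloringsWithoutRainbowPath_le_of_neighborFinset_sdiff hG huv hadj ?_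
    rw [Fintype.card_fin, pow_mul]
    have hk3 : (3 : ℝ) ≤ k := by exact_mod_cast hk
    have h3k : ((3 * k - 2 : ℕ) : ℝ) = 3 * k - 2 := by
      rw [Nat.cast_sub (by omega)]
      push_cast
      ring
    refine sq_mul_pow_le_pow_of_two_mul_logb_le (b := (k : ℝ) ^ 2 / (3 * k - 2)) ?_ ?_ hn ?_
    · rw [one_lt_div (by linarith)]
      nlinarith
    · rw [h3k, div_mul_cancel₀ _ (by linarith), Nat.cast_pow]
    · have : (G.degree u : ℝ) = #(G.neighborFinset u ∩ G.neighborFinset v) +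
          #(G.neighborFinset u \ G.neighborFinset v) := by exact_mod_cast hsplit.symm
      linarith

end SimpleGraph

/-- If `k ≥ 3` and `G` is a graph on `n` vertices of diameter `2` with minimum degree
at least `2 · (1 + log_{k²/(3k-2)}(k)) · log_k(n)`, then `rc(G) ≤ k`. -/
theorem rc_le_of_diam_two (k n : ℕ) (hk : 3 ≤ k) (G : SimpleGraph (Fin n))
    [DecidableRel G.Adj] (hdiam : G.diam = 2)
    (hδ : 2 * (1 + Real.logb ((k : ℝ) ^ 2 / (3 * (k : ℝ) - 2)) k) * Real.logb k n ≤
      (G.minDegree : ℝ)) :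
    ∃ c : Sym2 (Fin n) → Fin k, IsRainbowConnected G c := by
  have : NeZero k := ⟨by omega⟩
  have hG : G.ediam ≤ 2 := by
    rw [← ENat.natCast_toNat (ediam_ne_top_of_diam_ne_zero (by omega)), ← diam, hdiam]
    rfl
  have hk1 : (1 : ℝ) < k := by exact_mod_cast (by omega : 1 < k)
  have hlogb : Real.logb ((k : ℝ) ^ 2 / (3 * k - 2)) k * Real.logb k n =
      Real.logb ((k : ℝ) ^ 2 / (3 * k - 2)) n := Real.mul_logb (by positivity) hk1.ne' (by linarith)
  refine exists_isRainbowConnected_of_sq_card_mul_le fun u v huv => ?_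
  simpa using sq_card_mul_card_coloringsWithoutRainbowPath_le hG hk huv <| by
    calc _ = 2 * (1 + Real.logb ((k : ℝ) ^ 2 / (3 * k - 2)) k) * Real.logb k n := by
          rw [Fintype.card_fin]; linear_combination -2 * hlogb
      _ ≤ G.minDegree := hδ
      _ ≤ G.degree u := by exact_mod_cast G.minDegree_le_degree u
end
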